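/- arXiv:2510.20773 — 2 statements merged into one kernel-verified Lean document; each statement's English description precedes it below -/
import Mathlib

section
/- Let α ∈ (0,1), s > t ≥ 0, and suppose f ∈ H^s(ℝ^d) satisfies 0 < |f|_{H^t} ≤ a and ‖f‖_{H^s} ≤ b. Then |f|_{H^{t,α}} ≤ C a (log(b/a + 1))^α, with C depending only on α and s − t. -/
open MeasureTheory FourierTransform

/-!
Split the frequencies at a radius `R`. Since `log (x + 1) ≤ log (R + 1) + log (x / R + 1)` and
`log (y + 1) ^ α ≤ (α / σ) ^ α * y ^ σ` with `σ = min α δ`, the weight satisfies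
`|ξ| ^ t * log (|ξ| + 1) ^ α ≲ log (R + 1) ^ α * |ξ| ^ t + R ^ (-σ) * ⟨ξ⟩ ^ (t + δ)`,
where `⟨ξ⟩ = (1 + |ξ| ^ 2) ^ (1 / 2)`, so that `|f|_{H^{t,α}} ≲ log (R + 1) ^ α * a + R ^ (-σ) * b`.
If `b ≥ a`, the choice `R ^ σ = b / a` balances the two terms, and
`log (R + 1) ≤ σ⁻¹ * log (b / a + 1)`. If `b < a`, the crude bound `|f|_{H^{t,α}} ≲ b` suffices,
because `r ≤ r ^ α ≤ (log (r + 1) / log 2) ^ α` for `r = b / a ∈ [0, 1]`.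
-/

namespace Real

lemma log_add_one_le_rpow_div {y p : ℝ} (hy : 0 ≤ y) (hp : 0 < p) (hp1 : p ≤ 1) :
    log (y + 1) ≤ y ^ p / p := by
  have hsub : (y + 1) ^ p ≤ y ^ p + 1 := by
    simpa using rpow_add_le_add_rpow hy zero_le_one hp.le hp1
  have : p * log (y + 1) ≤ y ^ p :=
    calc p * log (y + 1) = log ((y + 1) ^ p) := (log_rpow (by linarith) p).symm
      _ ≤ log (y ^ p + 1) := log_le_log (by positivity) hsub
      _ ≤ y ^ p := (log_le_sub_one_of_pos (by positivity)).trans_eq (by ring)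
  rwa [le_div_iff₀ hp, mul_comm]

lemma log_rpow_add_one_le {x q : ℝ} (hx : 0 ≤ x) (hq : 1 ≤ q) :
    log (x ^ q + 1) ≤ q * log (x + 1) := by
  have : x ^ q + 1 ≤ (x + 1) ^ q := by simpa using add_rpow_le_rpow_add hx zero_le_one hq
  calc log (x ^ q + 1) ≤ log ((x + 1) ^ q) := log_le_log (by positivity) this
    _ = q * log (x + 1) := log_rpow (by linarith) q

lemma mul_log_two_le_log_add_one {x : ℝ} (hx : 0 ≤ x) (hx1 : x ≤ 1) :
    x * log 2 ≤ log (x + 1) := by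
  have : (2 : ℝ) ^ x ≤ x + 1 := by
    simpa [one_add_one_eq_two, add_comm] using
      rpow_one_add_le_one_add_mul_self (s := 1) (by norm_num) hx hx1
  calc x * log 2 = log (2 ^ x) := (log_rpow two_pos x).symm
    _ ≤ log (x + 1) := log_le_log (by positivity) this

lemma mul_log_two_rpow_le_mul_log_div_add_one_rpow {a b α : ℝ} (ha : 0 < a) (hb : 0 ≤ b)
    (hba : b ≤ a) (hα : 0 ≤ α) (hα1 : α ≤ 1) : b * log 2 ^ α ≤ a * log (b / a + 1) ^ α := by
  have hr : 0 ≤ b / a := div_nonneg hb ha.le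
  have hr1 : b / a ≤ 1 := (div_le_one ha).2 hba
  calc b * log 2 ^ α = a * (b / a * log 2 ^ α) := by field_simp
    _ ≤ a * ((b / a) ^ α * log 2 ^ α) := by gcongr; exact self_le_rpow_of_le_one hr hr1 hα1
    _ = a * (b / a * log 2) ^ α := by rw [mul_rpow hr (log_nonneg one_le_two)]
    _ ≤ a * log (b / a + 1) ^ α := by gcongr; exact mul_log_two_le_log_add_one hr hr1

lemma log_add_one_rpow_le {α σ x : ℝ} (hσ : 0 < σ) (hσα : σ ≤ α) (hx : 0 ≤ x) :
    log (x + 1) ^ α ≤ (α / σ) ^ α * x ^ σ := by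
  have hα : 0 < α := hσ.trans_le hσα
  have hlog : log (x + 1) ≤ α / σ * x ^ (σ / α) := by
    have := log_add_one_le_rpow_div hx (div_pos hσ hα) ((div_le_one hα).2 hσα)
    calc log (x + 1) ≤ x ^ (σ / α) / (σ / α) := this
      _ = α / σ * x ^ (σ / α) := by field_simp
  calc log (x + 1) ^ α ≤ (α / σ * x ^ (σ / α)) ^ α := by
        gcongr; exact log_nonneg (by linarith)
    _ = (α / σ) ^ α * x ^ σ := by
        rw [mul_rpow (by positivity) (by positivity), ← rpow_mul hx, div_mul_cancel₀ _ hα.ne']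

lemma log_add_one_rpow_le_add {α σ R x : ℝ} (hσ : 0 < σ) (hσα : σ ≤ α) (hα1 : α ≤ 1)
    (hR : 0 < R) (hx : 0 ≤ x) :
    log (x + 1) ^ α ≤ log (R + 1) ^ α + (α / σ) ^ α / R ^ σ * x ^ σ := by
  have hα : 0 < α := hσ.trans_le hσα
  have hxR : 0 ≤ x / R := div_nonneg hx hR.le
  have hsplit : log (x + 1) ≤ log (R + 1) + log (x / R + 1) := by
    rw [← log_mul (by positivity) (by positivity)]
    refine log_le_log (by positivity) ?_
    have : R * (x / R) = x := mul_div_cancel₀ x hR.ne'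
    nlinarith
  calc log (x + 1) ^ α ≤ (log (R + 1) + log (x / R + 1)) ^ α := by
        gcongr; exact log_nonneg (by linarith)
    _ ≤ log (R + 1) ^ α + log (x / R + 1) ^ α :=
        rpow_add_le_add_rpow (log_nonneg (by linarith)) (log_nonneg (by linarith)) hα.le hα1
    _ ≤ log (R + 1) ^ α + (α / σ) ^ α * (x / R) ^ σ := by
        gcongr; exact log_add_one_rpow_le hσ hσα hxR
    _ = log (R + 1) ^ α + (α / σ) ^ α / R ^ σ * x ^ σ := by
        rw [div_rpow hx hR.le]; ring

lemma rpow_two_mul_le_one_add_sq_rpow {x s r : ℝ} (hx : 0 ≤ x) (hs : 0 ≤ s) (hsr : s ≤ r) :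
    x ^ (2 * s) ≤ (1 + x ^ 2) ^ r :=
  calc x ^ (2 * s) = (x ^ 2) ^ s := by rw [rpow_mul hx, rpow_two]
    _ ≤ (1 + x ^ 2) ^ s := by gcongr; linarith
    _ ≤ (1 + x ^ 2) ^ r := rpow_le_rpow_of_exponent_le (by nlinarith) hsr

end Real

open Real

lemma rpow_mul_rpow_le_of_rpow_le {t δ σ α c m x y : ℝ} (ht : 0 ≤ t) (hσ : 0 < σ) (hσδ : σ ≤ δ)
    (hx : 0 ≤ x) (hy : 0 ≤ y) (h : y ^ α ≤ c + m * x ^ σ) :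
    x ^ (2 * t) * y ^ (2 * α) ≤
      (√2 * c) ^ 2 * x ^ (2 * t) + (√2 * m) ^ 2 * (1 + x ^ 2) ^ (t + δ) := by
  have hsq : y ^ (2 * α) ≤ 2 * (c ^ 2 + m ^ 2 * x ^ (2 * σ)) := by
    rw [mul_comm 2 α, rpow_mul hy, rpow_two, mul_comm 2 σ, rpow_mul hx, rpow_two]
    calc (y ^ α) ^ 2 ≤ (c + m * x ^ σ) ^ 2 := by gcongr
      _ ≤ 2 * (c ^ 2 + (m * x ^ σ) ^ 2) := add_sq_le
      _ = 2 * (c ^ 2 + m ^ 2 * (x ^ σ) ^ 2) := by ring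
  have hweight : x ^ (2 * t) * x ^ (2 * σ) ≤ (1 + x ^ 2) ^ (t + δ) := by
    rw [← rpow_add' hx (by positivity), ← mul_add]
    exact rpow_two_mul_le_one_add_sq_rpow hx (by positivity) (by linarith)
  calc x ^ (2 * t) * y ^ (2 * α) ≤ x ^ (2 * t) * (2 * (c ^ 2 + m ^ 2 * x ^ (2 * σ))) := by
        gcongr
    _ = 2 * c ^ 2 * x ^ (2 * t) + 2 * m ^ 2 * (x ^ (2 * t) * x ^ (2 * σ)) := by ring
    _ ≤ 2 * c ^ 2 * x ^ (2 * t) + 2 * m ^ 2 * (1 + x ^ 2) ^ (t + δ) := by gcongr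
    _ = (√2 * c) ^ 2 * x ^ (2 * t) + (√2 * m) ^ 2 * (1 + x ^ 2) ^ (t + δ) := by
        simp only [mul_pow, sq_sqrt zero_le_two]

lemma sqrt_integral_mul_le {E : Type*} [MeasurableSpace E] {μ : Measure E} {w u v g : E → ℝ}
    {p q : ℝ} (hp : 0 ≤ p) (hq : 0 ≤ q) (hg : ∀ x, 0 ≤ g x)
    (hw : Integrable (fun x => w x * g x) μ) (hu : Integrable (fun x => u x * g x) μ)
    (hv : Integrable (fun x => v x * g x) μ) (h : ∀ x, w x ≤ p ^ 2 * u x + q ^ 2 * v x) :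
    √(∫ x, w x * g x ∂μ) ≤ p * √(∫ x, u x * g x ∂μ) + q * √(∫ x, v x * g x ∂μ) := by
  set U := ∫ x, u x * g x ∂μ
  set V := ∫ x, v x * g x ∂μ
  have hint : ∫ x, w x * g x ∂μ ≤ p ^ 2 * U + q ^ 2 * V := by
    calc ∫ x, w x * g x ∂μ ≤ ∫ x, p ^ 2 * (u x * g x) + q ^ 2 * (v x * g x) ∂μ := by
          refine integral_mono hw ((hu.const_mul _).add (hv.const_mul _)) fun x => ?_
          dsimp only
          nlinarith [mul_le_mul_of_nonneg_right (h x) (hg x)]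
      _ = p ^ 2 * U + q ^ 2 * V := by
          rw [integral_add (hu.const_mul _) (hv.const_mul _), integral_const_mul,
            integral_const_mul]
  refine sqrt_le_iff.2 ⟨by positivity, hint.trans ?_⟩
  have hU : U ≤ √U ^ 2 := sq_sqrt' ▸ le_max_left U 0
  have hV : V ≤ √V ^ 2 := sq_sqrt' ▸ le_max_left V 0
  nlinarith [mul_nonneg (mul_nonneg hp hq) (mul_nonneg (sqrt_nonneg U) (sqrt_nonneg V)),
    mul_le_mul_of_nonneg_left hU (sq_nonneg p), mul_le_mul_of_nonneg_left hV (sq_nonneg q)]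

lemma le_mul_log_div_add_one_rpow {α σ a b A B X : ℝ} (hσ : 0 < σ) (hσα : σ ≤ α) (hα1 : α ≤ 1)
    (ha : 0 < a) (hA : A ≤ a) (hB0 : 0 ≤ B) (hB : B ≤ b)
    (hX : ∀ c m, 0 ≤ c → 0 ≤ m → (∀ x, 0 ≤ x → log (x + 1) ^ α ≤ c + m * x ^ σ) →
      X ≤ √2 * c * A + √2 * m * B) :
    X ≤ √2 * (σ⁻¹ ^ α + (α / σ) ^ α / log 2 ^ α) * a * log (b / a + 1) ^ α := by
  have hα : 0 < α := hσ.trans_le hσα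
  set k := (α / σ) ^ α
  have hk : 0 ≤ k := by positivity
  have hlog2 : 0 < log 2 ^ α := rpow_pos_of_pos (log_pos one_lt_two) α
  have hb : 0 ≤ b := hB0.trans hB
  set r := b / a with hr_def
  have hr : 0 ≤ r := div_nonneg hb ha.le
  have hL : 0 ≤ log (r + 1) ^ α := rpow_nonneg (log_nonneg (by linarith)) α
  rcases le_total b a with hba | hab
  · have hsmall : X ≤ √2 * k * b := by
      refine (hX 0 k le_rfl hk fun x hx => ?_).trans ?_
      · simpa using log_add_one_rpow_le hσ hσα hx
      · simp only [mul_zero, zero_mul, zero_add]; gcongr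
    have hb_log := mul_log_two_rpow_le_mul_log_div_add_one_rpow ha hb hba hα.le hα1
    calc X ≤ √2 * k * b := hsmall
      _ = √2 * (k / log 2 ^ α) * (b * log 2 ^ α) := by field_simp
      _ ≤ √2 * (k / log 2 ^ α) * (a * log (r + 1) ^ α) := by gcongr
      _ ≤ √2 * (σ⁻¹ ^ α + k / log 2 ^ α) * (a * log (r + 1) ^ α) := by
          gcongr; exact le_add_of_nonneg_left (by positivity)
      _ = _ := by ring
  · have hr1 : 1 ≤ r := (one_le_div ha).2 hab
    set R := r ^ σ⁻¹
    have hR : 1 ≤ R := one_le_rpow hr1 (inv_nonneg.2 hσ.le)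
    have hlogR0 : 0 ≤ log (R + 1) := log_nonneg (by linarith)
    have hb_pos : 0 < b := ha.trans_le hab
    have hlarge := hX _ _ (rpow_nonneg hlogR0 α) (by positivity)
      fun x hx => log_add_one_rpow_le_add hσ hσα hα1 (by linarith) hx
    rw [rpow_inv_rpow hr hσ.ne'] at hlarge
    have hlogR : log (R + 1) ^ α ≤ σ⁻¹ ^ α * log (r + 1) ^ α := by
      rw [← mul_rpow (by positivity) (log_nonneg (by linarith))]
      gcongr
      exact log_rpow_add_one_le hr ((one_le_inv₀ hσ).2 (hσα.trans hα1))
    have hk_log : k ≤ k / log 2 ^ α * log (r + 1) ^ α := by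
      rw [div_mul_eq_mul_div, le_div_iff₀ hlog2]
      gcongr
      linarith
    calc X ≤ √2 * log (R + 1) ^ α * A + √2 * (k / r) * B := hlarge
      _ ≤ √2 * log (R + 1) ^ α * a + √2 * (k / r) * b := by gcongr
      _ = √2 * a * (log (R + 1) ^ α + k) := by
          rw [hr_def]; field_simp
      _ ≤ √2 * a * (σ⁻¹ ^ α * log (r + 1) ^ α + k / log 2 ^ α * log (r + 1) ^ α) := by
          gcongr
      _ = _ := by ring

/-- If `0 < |f|_{H^t} ≤ a` and `‖f‖_{H^s} ≤ b` with `s = t + δ`, then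
`|f|_{H^{t,α}} ≤ C a (log(b/a + 1))^α`, with `C` depending only on `α` and `δ = s - t`. -/
theorem log_sobolev_interpolation_bound (α δ : ℝ) (hα : α ∈ Set.Ioo (0:ℝ) 1) (hδ : 0 < δ) :
    ∃ C > 0, ∀ (d : ℕ) (t : ℝ), 0 ≤ t →
      ∀ (f : EuclideanSpace ℝ (Fin d) → ℂ) (a b : ℝ),
        Integrable (fun ξ => ‖ξ‖ ^ (2*t) * ‖𝓕 f ξ‖ ^ 2) →
        Integrable (fun ξ => ‖ξ‖ ^ (2*t) * (Real.log (‖ξ‖ + 1)) ^ (2*α) * ‖𝓕 f ξ‖ ^ 2) →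
        Integrable (fun ξ => (1 + ‖ξ‖ ^ 2) ^ (t + δ) * ‖𝓕 f ξ‖ ^ 2) →
        0 < Real.sqrt (∫ ξ, ‖ξ‖ ^ (2*t) * ‖𝓕 f ξ‖ ^ 2) →
        Real.sqrt (∫ ξ, ‖ξ‖ ^ (2*t) * ‖𝓕 f ξ‖ ^ 2) ≤ a →
        Real.sqrt (∫ ξ, (1 + ‖ξ‖ ^ 2) ^ (t + δ) * ‖𝓕 f ξ‖ ^ 2) ≤ b →
        Real.sqrt (∫ ξ, ‖ξ‖ ^ (2*t) * (Real.log (‖ξ‖ + 1)) ^ (2*α) * ‖𝓕 f ξ‖ ^ 2)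
          ≤ C * a * (Real.log (b / a + 1)) ^ α := by
  obtain ⟨hα0, hα1⟩ := hα
  set σ := min α δ
  have hσ : 0 < σ := lt_min hα0 hδ
  have hC : 0 < √2 * (σ⁻¹ ^ α + (α / σ) ^ α / log 2 ^ α) := by
    have hlog2 : 0 < log 2 ^ α := rpow_pos_of_pos (log_pos one_lt_two) α
    have hσα : 0 < σ⁻¹ ^ α := rpow_pos_of_pos (inv_pos.2 hσ) α
    positivity
  refine ⟨_, hC, fun d t ht f a b hA_int hX_int hB_int hA_pos hA hB => ?_⟩
  refine le_mul_log_div_add_one_rpow hσ (min_le_left α δ) hα1.le (hA_pos.trans_le hA) hA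
    (sqrt_nonneg _) hB fun c m hc hm hlog => ?_
  exact sqrt_integral_mul_le (by positivity) (by positivity) (fun ξ => sq_nonneg ‖𝓕 f ξ‖)
    hX_int hA_int hB_int fun ξ => rpow_mul_rpow_le_of_rpow_le ht hσ (min_le_right α δ)
      (norm_nonneg ξ) (log_nonneg (by linarith [norm_nonneg ξ])) (hlog _ (norm_nonneg ξ))
end

section
/- Let I > 0, and let g : [0,T] → [1,∞) be continuous with g(t)⁴ ≥ exp(4I ∫₀ᵗ g(s)^{−4} ds) for all t. Then ∫₀ᵗ g(s)^{−4} ds ≤ log(1 + 4I t)/(4I), and consequently max_{0≤s≤t} g(s)⁴ ≥ 4I t / (4 log(1 + 4I t)) · c for an absolute constant c > 0 (precisely: max_{0≤s≤t} g(s)⁴ ≥ I t / log(1 + 4It) up to absolute constants). -/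
/-!
With `F t = ∫₀ᵗ g⁻⁴`, the hypothesis says that `exp (4 I F)` has derivative
`4 I g⁻⁴ exp (4 I F) ≤ 4 I`, so `exp (4 I F t) ≤ 1 + 4 I t`. On the other hand
`F t ≥ t / max_{[0,t]} g⁴`, and comparing the two bounds on `F t` bounds `max g⁴` from below.
-/

open Set Real intervalIntegral

theorem hasDerivAt_integral_of_continuousOn_Icc {f : ℝ → ℝ} {a b x : ℝ}
    (hf : ContinuousOn f (Icc a b)) (hx : x ∈ Ioo a b) :
    HasDerivAt (fun u => ∫ y in a..u, f y) (f x) x :=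
  integral_hasDerivAt_right
    (hf.mono (uIcc_of_le hx.1.le ▸ Icc_subset_Icc_right hx.2.le)).intervalIntegrable
    ((hf.mono Ioo_subset_Icc_self).stronglyMeasurableAtFilter isOpen_Ioo x hx)
    (hf.continuousAt (Icc_mem_nhds hx.1 hx.2))

theorem exp_mul_integral_le_one_add_mul {f : ℝ → ℝ} {a b c : ℝ} (hc : 0 ≤ c) (hab : a ≤ b)
    (hf : ContinuousOn f (Icc a b))
    (hgrowth : ∀ x ∈ Ioo a b, exp (c * ∫ y in a..x, f y) * f x ≤ 1) :
    exp (c * ∫ x in a..b, f x) ≤ 1 + c * (b - a) := by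
  set G : ℝ → ℝ := fun u => exp (c * ∫ y in a..u, f y)
  have hG' : ∀ x ∈ Ioo a b, HasDerivAt G (G x * (c * f x)) x := fun x hx =>
    ((hasDerivAt_integral_of_continuousOn_Icc hf hx).const_mul c).exp
  have hGc : ContinuousOn G (Icc a b) := by
    have := continuousOn_primitive_interval' (μ := MeasureTheory.volume)
      (hf.intervalIntegrable_of_Icc hab) left_mem_uIcc
    exact continuous_exp.comp_continuousOn (continuousOn_const.mul (uIcc_of_le hab ▸ this))
  rw [← interior_Icc] at hG' hgrowth
  have hG_sub := (convex_Icc a b).image_sub_le_mul_sub_of_deriv_le hGc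
    (fun x hx => (hG' x hx).differentiableAt.differentiableWithinAt) (C := c) (fun x hx => by
      rw [(hG' x hx).deriv, mul_left_comm]
      exact mul_le_of_le_one_right hc (hgrowth x hx))
    a (left_mem_Icc.2 hab) b (right_mem_Icc.2 hab) hab
  simp only [G, integral_same, mul_zero, exp_zero] at hG_sub
  linarith

theorem integral_le_log_one_add_mul_div {f : ℝ → ℝ} {a b c : ℝ} (hc : 0 < c) (hab : a ≤ b)
    (hf : ContinuousOn f (Icc a b))
    (hgrowth : ∀ x ∈ Ioo a b, exp (c * ∫ y in a..x, f y) * f x ≤ 1) :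
    ∫ x in a..b, f x ≤ log (1 + c * (b - a)) / c := by
  rw [le_div_iff₀' hc, le_log_iff_exp_le (by nlinarith)]
  exact exp_mul_integral_le_one_add_mul hc.le hab hf hgrowth

theorem exists_mul_le_integral_of_continuousOn {f : ℝ → ℝ} {a b : ℝ} (hab : a ≤ b)
    (hf : ContinuousOn f (Icc a b)) :
    ∃ s ∈ Icc a b, (b - a) * f s ≤ ∫ x in a..b, f x := by
  obtain ⟨s, hs, hmin⟩ := isCompact_Icc.exists_isMinOn (nonempty_Icc.2 hab) hf
  refine ⟨s, hs, ?_⟩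
  simpa using integral_mono_on hab (_root_.intervalIntegrable_const (c := f s))
    (hf.intervalIntegrable_of_Icc (μ := MeasureTheory.volume) hab) fun x hx => hmin hx

theorem lagrangian_deformation_lower_bound_general (I T : ℝ) (hI : 0 < I)
    (g : ℝ → ℝ) (hgc : ContinuousOn g (Set.Icc 0 T))
    (hgrow : ∀ t ∈ Set.Icc (0:ℝ) T,
      Real.exp (4 * I * ∫ s in (0:ℝ)..t, ((g s) ^ 4)⁻¹) ≤ (g t) ^ 4) :
    ∀ t ∈ Set.Icc (0:ℝ) T,
      (∫ s in (0:ℝ)..t, ((g s) ^ 4)⁻¹) ≤ Real.log (1 + 4 * I * t) / (4 * I) ∧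
      (0 < t → ∃ s ∈ Set.Icc (0:ℝ) t,
        I * t / Real.log (1 + 4 * I * t) ≤ (g s) ^ 4) := by
  intro t ⟨ht0, htT⟩
  have hsub : Icc 0 t ⊆ Icc 0 T := Icc_subset_Icc_right htT
  have hpos : ∀ s ∈ Icc 0 t, 0 < g s ^ 4 := fun s hs =>
    (exp_pos _).trans_le (hgrow s (hsub hs))
  have hcont : ContinuousOn (fun s => (g s ^ 4)⁻¹) (Icc 0 t) :=
    ((hgc.mono hsub).pow 4).inv₀ fun s hs => (hpos s hs).ne'
  have hint : ∫ s in (0:ℝ)..t, (g s ^ 4)⁻¹ ≤ log (1 + 4 * I * t) / (4 * I) := by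
    simpa using integral_le_log_one_add_mul_div (by positivity) ht0 hcont fun x hx =>
      have hx' := Ioo_subset_Icc_self hx
      mul_inv_le_one_of_le₀ (hgrow x (hsub hx')) (hpos x hx').le
  refine ⟨hint, fun ht => ?_⟩
  obtain ⟨s, hs, hmin⟩ := exists_mul_le_integral_of_continuousOn ht0 hcont
  refine ⟨s, hs, ?_⟩
  have hL : 0 < log (1 + 4 * I * t) := log_pos (lt_add_of_pos_right _ (by positivity))
  have hmax : t * (g s ^ 4)⁻¹ ≤ log (1 + 4 * I * t) / (4 * I) := by
    simpa using hmin.trans hint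
  rw [mul_inv_le_iff₀ (hpos s hs), div_mul_eq_mul_div, le_div_iff₀ (by positivity)] at hmax
  rw [div_le_iff₀ hL]
  linarith [mul_pos hI ht]

/-- Core integral inequality for the large Lagrangian deformation lower bound. -/
theorem lagrangian_deformation_lower_bound (I T : ℝ) (hI : 0 < I) (hT : 0 ≤ T)
    (g : ℝ → ℝ) (hgc : ContinuousOn g (Set.Icc 0 T))
    (hg1 : ∀ s ∈ Set.Icc (0:ℝ) T, 1 ≤ g s)
    (hgrow : ∀ t ∈ Set.Icc (0:ℝ) T,
      Real.exp (4 * I * ∫ s in (0:ℝ)..t, ((g s) ^ 4)⁻¹) ≤ (g t) ^ 4) :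
    ∀ t ∈ Set.Icc (0:ℝ) T,
      (∫ s in (0:ℝ)..t, ((g s) ^ 4)⁻¹) ≤ Real.log (1 + 4 * I * t) / (4 * I) ∧
      (0 < t → ∃ s ∈ Set.Icc (0:ℝ) t,
        I * t / Real.log (1 + 4 * I * t) ≤ (g s) ^ 4) :=
  lagrangian_deformation_lower_bound_general I T hI g hgc hgrow
end
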